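/- arXiv:0808.1629 — 3 statements merged into one kernel-verified Lean document; each statement's English description precedes it below -/
import Mathlib

section
/- With the combinatorial setup below, if p is a prime with p ≥ 5, then κ(γ) < 1 for every γ ∈ Γ ∪ Δ; consequently κ(π) < 1 for every permutation π of J. -/
namespace PaperPurity

variable {r : ℕ}

/-- `J₊ = {(i,j) : j ≤ c < i}` (translated to 0-based indexing on `Fin r`). -/
def Jp (c : ℕ) : Set (Fin r × Fin r) := {q | q.2.val < c ∧ c ≤ q.1.val}

/-- `J₀ = {(i,j) : i,j ≤ c or i,j > c}` (0-based). -/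
def Jz (c : ℕ) : Set (Fin r × Fin r) :=
  {q | (q.1.val < c ∧ q.2.val < c) ∨ (c ≤ q.1.val ∧ c ≤ q.2.val)}

/-- `J₋ = {(i,j) : i ≤ c < j}` (0-based). -/
def Jm (c : ℕ) : Set (Fin r × Fin r) := {q | q.1.val < c ∧ c ≤ q.2.val}

/-- Apply `π^s` to both entries of a pair. -/
def iter (π : Equiv.Perm (Fin r)) (s : ℕ) (q : Fin r × Fin r) : Fin r × Fin r :=
  ((π ^ s) q.1, (π ^ s) q.2)

/-- The π-order `ν(i,j)`: the smallest positive `ν` with `(π^ν i, π^ν j) ∈ J₊ ∪ J₋`.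
On `J₀,₀` this `sInf` also computes the extended π-order `ν(i,j) - s`. -/
noncomputable def nu (π : Equiv.Perm (Fin r)) (c : ℕ) (q : Fin r × Fin r) : ℕ :=
  sInf {ν : ℕ | 0 < ν ∧ iter π ν q ∈ Jp c ∪ Jm c}

/-- `J₋,₁`. -/
def Jm1 (π : Equiv.Perm (Fin r)) (c : ℕ) : Set (Fin r × Fin r) :=
  {q | q ∈ Jm c ∧ iter π (nu π c q) q ∈ Jp c}

/-- `J₊,₁`. -/
def Jp1 (π : Equiv.Perm (Fin r)) (c : ℕ) : Set (Fin r × Fin r) :=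
  {q' | ∃ q ∈ Jm1 π c, q' = iter π (nu π c q) q}

/-- `J₊,₂ = J₊ \ J₊,₁`. -/
def Jp2 (π : Equiv.Perm (Fin r)) (c : ℕ) : Set (Fin r × Fin r) := Jp c \ Jp1 π c

/-- `J₀,₀`. -/
def Jz0 (π : Equiv.Perm (Fin r)) (c : ℕ) : Set (Fin r × Fin r) :=
  {q' | ∃ q ∈ Jm1 π c, ∃ s : ℕ, 1 ≤ s ∧ s ≤ nu π c q - 1 ∧ q' = iter π s q}

/-- The π-level `η`. -/
noncomputable def eta (π : Equiv.Perm (Fin r)) (c : ℕ) (q' : Fin r × Fin r) : ℕ :=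
  sInf {s : ℕ | ∃ q ∈ Jm1 π c, s ≤ nu π c q ∧ q' = iter π s q}

/-- Membership in `Γ` for the tuple `(γ 1, …, γ s)`. -/
def inGamma (π : Equiv.Perm (Fin r)) (c s : ℕ) (γ : ℕ → Fin r) : Prop :=
  2 ≤ s ∧ (∀ ℓ : ℕ, 1 ≤ ℓ → ℓ ≤ s - 2 → (γ ℓ, γ (ℓ + 1)) ∈ Jz0 π c) ∧
    (γ (s - 1), γ s) ∈ Jp2 π c

/-- Membership in `Δ` for the tuple `(γ 1, …, γ s)`. -/
def inDelta (π : Equiv.Perm (Fin r)) (c s : ℕ) (γ : ℕ → Fin r) : Prop :=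
  3 ≤ s ∧ inGamma π c (s - 1) γ ∧ (γ (s - 1), γ s) ∈ Jz0 π c

/-- `n_t(γ)`. -/
noncomputable def nCount (π : Equiv.Perm (Fin r)) (c s : ℕ) (γ : ℕ → Fin r) (t : ℕ) : ℕ :=
  Set.ncard {ℓ : ℕ | 1 ≤ ℓ ∧ ℓ ≤ s - 1 ∧ (γ ℓ, γ (ℓ + 1)) ∈ Jz0 π c ∧
    nu π c (γ ℓ, γ (ℓ + 1)) = t}

/-- `κ(γ) = Σ_{t ≥ 1} n_t(γ) p^{-t} ∈ ℚ`. -/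
noncomputable def kappa (p : ℕ) (π : Equiv.Perm (Fin r)) (c s : ℕ) (γ : ℕ → Fin r) : ℚ :=
  ∑ᶠ t : ℕ, if 1 ≤ t then (nCount π c s γ t : ℚ) / (p : ℚ) ^ t else 0

/-- Membership in `Γ₁`. -/
def inGamma1 (π : Equiv.Perm (Fin r)) (c s : ℕ) (γ : ℕ → Fin r) : Prop :=
  inGamma π c s γ ∧ (γ 1, γ s) ∈ Jp1 π c ∧ (γ 2, γ s) ∉ Jp1 π c

/-- Membership in `Δ₁`. -/
def inDelta1 (π : Equiv.Perm (Fin r)) (c s : ℕ) (γ : ℕ → Fin r) : Prop :=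
  inDelta π c s γ ∧ (γ 1, γ s) ∈ Jp1 π c ∧ (γ 2, γ s) ∉ Jp1 π c

/-- `κ(π) = max {κ(γ) : γ ∈ Γ₁ ∪ Δ₁}` (and `0` if `Γ₁ ∪ Δ₁ = ∅`); realized as a
supremum in `ℝ` of the (finite) set of values together with `0`. -/
noncomputable def kappaPerm (p : ℕ) (π : Equiv.Perm (Fin r)) (c : ℕ) : ℝ :=
  sSup (insert (0 : ℝ) {x : ℝ | ∃ (s : ℕ) (γ : ℕ → Fin r),
    (inGamma1 π c s γ ∨ inDelta1 π c s γ) ∧ x = ((kappa p π c s γ : ℚ) : ℝ)})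

/-- The `k`-span of the matrix units `E_{i,j}`, `(i,j) ∈ S`. -/
def spanUnits (k : Type*) [Field k] {r : ℕ} (S : Set (Fin r × Fin r)) :
    Submodule k (Matrix (Fin r) (Fin r) k) :=
  Submodule.span k ((fun q : Fin r × Fin r => Matrix.single q.1 q.2 (1 : k)) '' S)


/-! ### Auxiliary lemmas -/

section Aux

open scoped Classical

lemma mem_Jz_iff {c : ℕ} {q : Fin r × Fin r} :
    q ∈ Jz c ↔ ¬ (q ∈ Jp c ∪ Jm c) := by
  simp only [Jp, Jz, Jm, Set.mem_union, Set.mem_setOf_eq]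
  omega

lemma iter_zero (π : Equiv.Perm (Fin r)) (q : Fin r × Fin r) : iter π 0 q = q := by
  simp [iter]

lemma iter_add (π : Equiv.Perm (Fin r)) (a b : ℕ) (q : Fin r × Fin r) :
    iter π (a + b) q = iter π a (iter π b q) := by
  simp [iter, pow_add, Equiv.Perm.mul_apply]

lemma iter_orderOf (π : Equiv.Perm (Fin r)) (q : Fin r × Fin r) :
    iter π (orderOf π) q = q := by
  simp [iter, pow_orderOf_eq_one]

lemma nu_spec (π : Equiv.Perm (Fin r)) (c : ℕ) (q : Fin r × Fin r)
    (h : q ∈ Jp c ∪ Jm c) :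
    0 < nu π c q ∧ iter π (nu π c q) q ∈ Jp c ∪ Jm c ∧ nu π c q ≤ orderOf π := by
  have hmem : orderOf π ∈ {ν : ℕ | 0 < ν ∧ iter π ν q ∈ Jp c ∪ Jm c} :=
    ⟨orderOf_pos π, by rw [iter_orderOf]; exact h⟩
  have hne : {ν : ℕ | 0 < ν ∧ iter π ν q ∈ Jp c ∪ Jm c}.Nonempty := ⟨_, hmem⟩
  have hm := Nat.sInf_mem hne
  exact ⟨hm.1, hm.2, Nat.sInf_le hmem⟩

lemma nu_min (π : Equiv.Perm (Fin r)) (c : ℕ) (q : Fin r × Fin r) {k : ℕ}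
    (hk0 : 0 < k) (hk : k < nu π c q) : iter π k q ∈ Jz c := by
  rw [mem_Jz_iff]
  intro hmem
  have hk' : k ∈ {ν : ℕ | 0 < ν ∧ iter π ν q ∈ Jp c ∪ Jm c} := ⟨hk0, hmem⟩
  exact absurd (Nat.sInf_le hk') (not_le.mpr hk)

lemma jz0_spec (π : Equiv.Perm (Fin r)) (c : ℕ) {q : Fin r × Fin r}
    (h : q ∈ Jz0 π c) :
    q ∈ Jz c ∧ 0 < nu π c q ∧ nu π c q ≤ orderOf π ∧
      iter π (nu π c q) q ∈ Jp c ∧ ∀ k < nu π c q, iter π k q ∈ Jz c := by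
  obtain ⟨q₀, hq₀, s, hs1, hs2, rfl⟩ := h
  obtain ⟨hq₀m, hq₀p⟩ := hq₀
  obtain ⟨hb1, hb2, hb3⟩ := nu_spec π c q₀ (Or.inr hq₀m)
  have hsν : s < nu π c q₀ := by omega
  have key : nu π c (iter π s q₀) = nu π c q₀ - s := by
    have hmem : nu π c q₀ - s ∈
        {ν : ℕ | 0 < ν ∧ iter π ν (iter π s q₀) ∈ Jp c ∪ Jm c} := by
      refine ⟨by omega, ?_⟩
      rw [← iter_add, Nat.sub_add_cancel hsν.le]
      exact Or.inl hq₀p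
    refine le_antisymm (Nat.sInf_le hmem) (le_csInf ⟨_, hmem⟩ ?_)
    rintro m ⟨hm0, hm⟩
    rw [← iter_add] at hm
    by_contra hcon
    push_neg at hcon
    have := nu_min π c q₀ (k := m + s) (by omega) (by omega)
    rw [mem_Jz_iff] at this
    exact this hm
  rw [key]
  refine ⟨nu_min π c q₀ hs1 hsν, by omega, by omega, ?_, ?_⟩
  · rw [← iter_add, Nat.sub_add_cancel hsν.le]
    exact hq₀p
  · intro k hk
    rcases Nat.eq_zero_or_pos k with hk0 | hk0
    · rw [hk0, iter_zero]
      exact nu_min π c q₀ hs1 hsν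
    · rw [← iter_add]
      exact nu_min π c q₀ (by omega) (by omega)

lemma jm_gt (π : Equiv.Perm (Fin r)) (c : ℕ) {q : Fin r × Fin r}
    (hz : q ∈ Jz0 π c) {u : ℕ} (hu : iter π u q ∈ Jm c) : nu π c q < u := by
  obtain ⟨hJz, hpos, hle, hJp, hall⟩ := jz0_spec π c hz
  by_contra h
  push_neg at h
  rcases lt_or_eq_of_le h with hlt | heq
  · have hzz := hall u hlt
    rw [mem_Jz_iff] at hzz
    exact hzz (Or.inr hu)
  · rw [← heq] at hJp
    simp only [Jp, Jm, Set.mem_setOf_eq] at hJp hu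
    omega

/-- The finset of positions of `γ` with π-order exactly `t`. -/
noncomputable def Aset (π : Equiv.Perm (Fin r)) (c s : ℕ) (γ : ℕ → Fin r) (t : ℕ) :
    Finset ℕ :=
  (Finset.Icc 1 (s - 1)).filter fun ℓ =>
    (γ ℓ, γ (ℓ + 1)) ∈ Jz0 π c ∧ nu π c (γ ℓ, γ (ℓ + 1)) = t

/-- The finset of positions of `γ` with π-order `< t`. -/
noncomputable def Bset (π : Equiv.Perm (Fin r)) (c s : ℕ) (γ : ℕ → Fin r) (t : ℕ) :
    Finset ℕ :=
  (Finset.Icc 1 (s - 1)).filter fun ℓ =>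
    (γ ℓ, γ (ℓ + 1)) ∈ Jz0 π c ∧ nu π c (γ ℓ, γ (ℓ + 1)) < t

lemma nCount_eq (π : Equiv.Perm (Fin r)) (c s : ℕ) (γ : ℕ → Fin r) (t : ℕ) :
    nCount π c s γ t = (Aset π c s γ t).card := by
  unfold nCount Aset
  rw [← Set.ncard_coe_finset]
  congr 1
  ext ℓ
  simp only [Set.mem_setOf_eq, Finset.coe_filter, Finset.mem_Icc]
  tauto

private lemma ivt (Q : ℕ → Prop) : ∀ (b a : ℕ), a ≤ b → ¬ Q a → Q b →
    ∃ m, a ≤ m ∧ m < b ∧ ¬ Q m ∧ Q (m + 1) := by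
  intro b
  induction b with
  | zero =>
    intro a hab hQa hQb
    have ha : a = 0 := by omega
    exact absurd hQb (ha ▸ hQa)
  | succ n ih =>
    intro a hab hQa hQb
    have han : a ≤ n := by
      by_contra hcon
      have : a = n + 1 := by omega
      exact hQa (this ▸ hQb)
    by_cases hQn : Q n
    · obtain ⟨m, h1, h2, h3, h4⟩ := ih a han hQa hQn
      exact ⟨m, h1, by omega, h3, h4⟩
    · exact ⟨n, han, Nat.lt_succ_self n, hQn, hQb⟩

/-- The key "ruler" inequality: between two positions of order `t` there is a
crossing, which is a position of smaller order unless it is the (unique)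
exceptional position `m₀`. -/
lemma card_A_le (π : Equiv.Perm (Fin r)) (c s : ℕ) (γ : ℕ → Fin r) (m₀ : ℕ)
    (hchain : ∀ m, 1 ≤ m → m ≤ s - 1 → m ≠ m₀ → (γ m, γ (m + 1)) ∈ Jz0 π c)
    (t : ℕ) :
    (Aset π c s γ t).card ≤ (Bset π c s γ t).card + 2 := by
  by_cases hA2 : (Aset π c s γ t).card ≤ 2
  · omega
  have hne : (Aset π c s γ t).Nonempty := Finset.card_pos.mp (by omega)
  set A := Aset π c s γ t with hAdef
  set M := A.max' hne with hMdef
  have hMA : M ∈ A := A.max'_mem hne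
  have hmem : ∀ ℓ ∈ A, (1 ≤ ℓ ∧ ℓ ≤ s - 1) ∧
      ((π ^ t) (γ (ℓ + 1))).val < c ∧ c ≤ ((π ^ t) (γ ℓ)).val := by
    intro ℓ hℓ
    rw [hAdef, Aset, Finset.mem_filter, Finset.mem_Icc] at hℓ
    obtain ⟨hIcc, hz, hν⟩ := hℓ
    have hspec := (jz0_spec π c hz).2.2.2.1
    rw [hν] at hspec
    exact ⟨hIcc, hspec⟩
  set Q : ℕ → Prop := fun m => c ≤ ((π ^ t) (γ m)).val with hQdef
  set f : ℕ → ℕ := fun ℓ => sInf {m | ℓ < m ∧ ¬ Q m ∧ Q (m + 1)} with hfdef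
  have hQM : Q M := (hmem M hMA).2.2
  have hkey : ∀ ℓ ∈ A.erase M,
      (ℓ < f ℓ ∧ ¬ Q (f ℓ) ∧ Q (f ℓ + 1)) ∧ ∀ b, ℓ < b → Q b → f ℓ < b := by
    intro ℓ hℓ
    have hℓA : ℓ ∈ A := Finset.mem_of_mem_erase hℓ
    have hℓM : ℓ < M := lt_of_le_of_ne (A.le_max' ℓ hℓA) (Finset.ne_of_mem_erase hℓ)
    have hQℓ1 : ¬ Q (ℓ + 1) := by
      have := (hmem ℓ hℓA).2.1
      simp only [hQdef]
      omega
    have hexists : ∀ b, ℓ < b → Q b → ∃ m, ℓ < m ∧ m < b ∧ ¬ Q m ∧ Q (m + 1) := by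
      intro b hb hQb
      obtain ⟨m, h1, h2, h3, h4⟩ := ivt Q b (ℓ + 1) hb hQℓ1 hQb
      exact ⟨m, by omega, h2, h3, h4⟩
    obtain ⟨m, hm1, hm2, hm3, hm4⟩ := hexists M hℓM hQM
    have hnemp : {m | ℓ < m ∧ ¬ Q m ∧ Q (m + 1)}.Nonempty := ⟨m, hm1, hm3, hm4⟩
    have hfmem : f ℓ ∈ {m | ℓ < m ∧ ¬ Q m ∧ Q (m + 1)} := by
      simp only [hfdef]
      exact Nat.sInf_mem hnemp
    refine ⟨hfmem, ?_⟩
    intro b hb hQb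
    obtain ⟨m', h1, h2, h3, h4⟩ := hexists b hb hQb
    have hmem' : m' ∈ {m | ℓ < m ∧ ¬ Q m ∧ Q (m + 1)} := ⟨h1, h3, h4⟩
    have hle : f ℓ ≤ m' := by
      simp only [hfdef]
      exact Nat.sInf_le hmem'
    omega
  have hmaps : ∀ ℓ ∈ A.erase M, f ℓ ∈ insert m₀ (Bset π c s γ t) := by
    intro ℓ hℓ
    have hℓA : ℓ ∈ A := Finset.mem_of_mem_erase hℓ
    have hℓM : ℓ < M := lt_of_le_of_ne (A.le_max' ℓ hℓA) (Finset.ne_of_mem_erase hℓ)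
    obtain ⟨⟨hlt, hnQ, hQ1⟩, hbnd⟩ := hkey ℓ hℓ
    have hfM : f ℓ < M := hbnd M hℓM hQM
    have h1 : 1 ≤ f ℓ := by
      have := (hmem ℓ hℓA).1.1
      omega
    have h2 : f ℓ ≤ s - 1 := by
      have := (hmem M hMA).1.2
      omega
    by_cases hm0 : f ℓ = m₀
    · exact Finset.mem_insert.mpr (Or.inl hm0)
    · have hz := hchain (f ℓ) h1 h2 hm0
      have hJm : iter π t (γ (f ℓ), γ (f ℓ + 1)) ∈ Jm c := by
        simp only [hQdef] at hnQ hQ1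
        simp only [Jm, iter, Set.mem_setOf_eq]
        exact ⟨by omega, hQ1⟩
      have hlt' : nu π c (γ (f ℓ), γ (f ℓ + 1)) < t := jm_gt π c hz hJm
      refine Finset.mem_insert.mpr (Or.inr ?_)
      rw [Bset, Finset.mem_filter, Finset.mem_Icc]
      exact ⟨⟨h1, h2⟩, hz, hlt'⟩
  have hinj : ∀ ℓ₁ ∈ A.erase M, ∀ ℓ₂ ∈ A.erase M, f ℓ₁ = f ℓ₂ → ℓ₁ = ℓ₂ := by
    have haux : ∀ ℓ₁ ∈ A.erase M, ∀ ℓ₂ ∈ A.erase M, ℓ₁ < ℓ₂ → f ℓ₁ < f ℓ₂ := by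
      intro ℓ₁ h₁ ℓ₂ h₂ hlt
      have hQℓ₂ : Q ℓ₂ := (hmem ℓ₂ (Finset.mem_of_mem_erase h₂)).2.2
      have ha := (hkey ℓ₁ h₁).2 ℓ₂ hlt hQℓ₂
      have hb := (hkey ℓ₂ h₂).1.1
      omega
    intro ℓ₁ h₁ ℓ₂ h₂ hf
    rcases lt_trichotomy ℓ₁ ℓ₂ with h | h | h
    · exact absurd hf (by have := haux ℓ₁ h₁ ℓ₂ h₂ h; omega)
    · exact h
    · exact absurd hf (by have := haux ℓ₂ h₂ ℓ₁ h₁ h; omega)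
  have hcard := Finset.card_le_card_of_injOn f hmaps hinj
  have h1 : (A.erase M).card = A.card - 1 := Finset.card_erase_of_mem hMA
  have h2 : (insert m₀ (Bset π c s γ t)).card ≤ (Bset π c s γ t).card + 1 :=
    Finset.card_insert_le _ _
  have h3 : 1 ≤ A.card := hne.card_pos
  omega

lemma Bset_succ_card (π : Equiv.Perm (Fin r)) (c s : ℕ) (γ : ℕ → Fin r) (t : ℕ) :
    (Bset π c s γ (t + 1)).card = (Bset π c s γ t).card + (Aset π c s γ t).card := by
  have hu : Bset π c s γ (t + 1) = Bset π c s γ t ∪ Aset π c s γ t := by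
    ext ℓ
    simp only [Bset, Aset, Finset.mem_filter, Finset.mem_union, Finset.mem_Icc]
    constructor
    · rintro ⟨h1, h2, h3⟩
      rcases Nat.lt_succ_iff_lt_or_eq.mp h3 with h | h
      · exact Or.inl ⟨h1, h2, h⟩
      · exact Or.inr ⟨h1, h2, h⟩
    · rintro (⟨h1, h2, h3⟩ | ⟨h1, h2, h3⟩)
      · exact ⟨h1, h2, by omega⟩
      · exact ⟨h1, h2, by omega⟩
  have hdisj : Disjoint (Bset π c s γ t) (Aset π c s γ t) := by
    rw [Finset.disjoint_left]
    intro a ha hb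
    rw [Bset, Finset.mem_filter] at ha
    rw [Aset, Finset.mem_filter] at hb
    omega
  rw [hu, Finset.card_union_of_disjoint hdisj]

lemma Bset_card_bound (π : Equiv.Perm (Fin r)) (c s : ℕ) (γ : ℕ → Fin r) (m₀ : ℕ)
    (hchain : ∀ m, 1 ≤ m → m ≤ s - 1 → m ≠ m₀ → (γ m, γ (m + 1)) ∈ Jz0 π c) :
    ∀ t : ℕ, (Bset π c s γ (t + 1)).card + 2 ≤ 2 ^ (t + 1) := by
  intro t
  induction t with
  | zero =>
    have hB : Bset π c s γ 1 = ∅ := by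
      refine Finset.eq_empty_of_forall_notMem fun ℓ h => ?_
      rw [Bset, Finset.mem_filter] at h
      have := (jz0_spec π c h.2.1).2.1
      omega
    rw [hB]
    simp
  | succ n ih =>
    have hA := card_A_le π c s γ m₀ hchain (n + 1)
    have heq := Bset_succ_card π c s γ (n + 1)
    have hpow : (2 : ℕ) ^ (n + 1 + 1) = 2 * 2 ^ (n + 1) := by ring
    omega

lemma Aset_card_bound (π : Equiv.Perm (Fin r)) (c s : ℕ) (γ : ℕ → Fin r) (m₀ : ℕ)
    (hchain : ∀ m, 1 ≤ m → m ≤ s - 1 → m ≠ m₀ → (γ m, γ (m + 1)) ∈ Jz0 π c)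
    (t : ℕ) (ht : 1 ≤ t) : (Aset π c s γ t).card ≤ 2 ^ t := by
  obtain ⟨u, rfl⟩ : ∃ u, t = u + 1 := ⟨t - 1, by omega⟩
  have h1 := Bset_card_bound π c s γ m₀ hchain u
  have h2 := card_A_le π c s γ m₀ hchain (u + 1)
  omega

private lemma geom_sum_aux : ∀ n : ℕ,
    ∑ t ∈ Finset.Icc 1 n, (2 / 5 : ℚ) ^ t = 2 / 3 * (1 - (2 / 5) ^ n) := by
  intro n
  induction n with
  | zero => simp
  | succ m ih =>
    rw [Finset.sum_Icc_succ_top (by omega), ih, pow_succ]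
    ring

lemma kappa_le_twothirds (p : ℕ) (hp5 : 5 ≤ p) (π : Equiv.Perm (Fin r)) (c s : ℕ)
    (γ : ℕ → Fin r) (m₀ : ℕ)
    (hchain : ∀ m, 1 ≤ m → m ≤ s - 1 → m ≠ m₀ → (γ m, γ (m + 1)) ∈ Jz0 π c) :
    kappa p π c s γ ≤ 2 / 3 := by
  set o := orderOf π with ho
  set F : ℕ → ℚ := fun t => if 1 ≤ t then (nCount π c s γ t : ℚ) / (p : ℚ) ^ t else 0
    with hF
  have hsupp : Function.support F ⊆ ↑(Finset.Icc 1 o) := by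
    intro t ht
    simp only [Function.mem_support, hF] at ht
    by_cases h1 : 1 ≤ t
    · rw [if_pos h1] at ht
      have hn : nCount π c s γ t ≠ 0 := by
        intro h
        rw [h] at ht
        simp at ht
      rw [nCount_eq] at hn
      obtain ⟨ℓ, hℓ⟩ := Finset.card_pos.mp (Nat.pos_of_ne_zero hn)
      rw [Aset, Finset.mem_filter] at hℓ
      have hb := (jz0_spec π c hℓ.2.1).2.2.1
      simp only [Finset.coe_Icc, Set.mem_Icc]
      exact ⟨h1, hℓ.2.2 ▸ hb⟩
    · rw [if_neg h1] at ht
      exact absurd rfl ht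
  have heq : kappa p π c s γ = ∑ᶠ t : ℕ, F t := rfl
  rw [heq, finsum_eq_finset_sum_of_support_subset F hsupp]
  have hbound : ∀ t ∈ Finset.Icc 1 o, F t ≤ (2 / 5 : ℚ) ^ t := by
    intro t ht
    rw [Finset.mem_Icc] at ht
    simp only [hF]
    rw [if_pos ht.1]
    have hn : (nCount π c s γ t : ℚ) ≤ (2 : ℚ) ^ t := by
      have := Aset_card_bound π c s γ m₀ hchain t ht.1
      rw [nCount_eq]
      exact_mod_cast this
    have hp' : (5 : ℚ) ^ t ≤ (p : ℚ) ^ t := by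
      apply pow_le_pow_left₀ (by norm_num)
      exact_mod_cast hp5
    calc (nCount π c s γ t : ℚ) / (p : ℚ) ^ t ≤ (2 : ℚ) ^ t / (5 : ℚ) ^ t := by
          apply div_le_div₀ (by positivity) hn (by positivity) hp'
      _ = (2 / 5 : ℚ) ^ t := by rw [div_pow]
  calc ∑ t ∈ Finset.Icc 1 o, F t ≤ ∑ t ∈ Finset.Icc 1 o, (2 / 5 : ℚ) ^ t :=
        Finset.sum_le_sum hbound
    _ ≤ 2 / 3 := by
        rw [geom_sum_aux]
        have hpow : (0 : ℚ) ≤ (2 / 5) ^ o := by positivity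
        linarith

lemma chain_of_mem (π : Equiv.Perm (Fin r)) (c s : ℕ) (γ : ℕ → Fin r)
    (h : inGamma π c s γ ∨ inDelta π c s γ) :
    ∃ m₀, ∀ m, 1 ≤ m → m ≤ s - 1 → m ≠ m₀ → (γ m, γ (m + 1)) ∈ Jz0 π c := by
  rcases h with hG | hD
  · obtain ⟨hs, hz, _⟩ := hG
    exact ⟨s - 1, fun m h1 h2 hm => hz m h1 (by omega)⟩
  · obtain ⟨hs, ⟨hs', hz, _⟩, hlast⟩ := hD
    refine ⟨s - 2, fun m h1 h2 hm => ?_⟩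
    by_cases hm1 : m ≤ s - 1 - 2
    · exact hz m h1 hm1
    · have hmeq : m = s - 1 := by omega
      subst hmeq
      have hss : s - 1 + 1 = s := by omega
      rw [hss]
      exact hlast

end Aux

theorem statement_8 (p : ℕ) (hp : p.Prime) (hp5 : 5 ≤ p)
    (c d : ℕ) (hc : 0 < c) (hd : 0 < d)
    (π : Equiv.Perm (Fin (c + d))) :
    (∀ (s : ℕ) (γ : ℕ → Fin (c + d)), inGamma π c s γ ∨ inDelta π c s γ →
        kappa p π c s γ < 1) ∧
      kappaPerm p π c < 1 := by
  have main : ∀ (s : ℕ) (γ : ℕ → Fin (c + d)), inGamma π c s γ ∨ inDelta π c s γ →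
      kappa p π c s γ ≤ 2 / 3 := by
    intro s γ h
    obtain ⟨m₀, hch⟩ := chain_of_mem π c s γ h
    exact kappa_le_twothirds p hp5 π c s γ m₀ hch
  constructor
  · intro s γ h
    calc kappa p π c s γ ≤ 2 / 3 := main s γ h
      _ < 1 := by norm_num
  · have hle : kappaPerm p π c ≤ 2 / 3 := by
      apply Real.sSup_le _ (by norm_num)
      rintro x hx
      rcases Set.mem_insert_iff.mp hx with rfl | ⟨s, γ, hγ, rfl⟩
      · norm_num
      · have h' : inGamma π c s γ ∨ inDelta π c s γ := by
          rcases hγ with h | h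
          · exact Or.inl h.1
          · exact Or.inr h.1
        have hq := main s γ h'
        have : ((kappa p π c s γ : ℚ) : ℝ) ≤ ((2 / 3 : ℚ) : ℝ) := by exact_mod_cast hq
        calc ((kappa p π c s γ : ℚ) : ℝ) ≤ ((2 / 3 : ℚ) : ℝ) := this
          _ = 2 / 3 := by norm_num
    linarith

end PaperPurity
end

section
/- With the combinatorial setup below, let p be a prime and let a ≥ 2 be an integer. If γ ∈ Γ satisfies n_t(γ) = 0 for every positive integer t not divisible by a, then κ(γ) < 1/(p^a − 2); in particular κ(γ) < 1 − 1/p. -/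
namespace PaperPurity

variable {r : ℕ}

section AuxPurity

lemma iter_iter (π : Equiv.Perm (Fin r)) (u v : ℕ) (q : Fin r × Fin r) :
    iter π u (iter π v q) = iter π (u + v) q := by
  simp [iter, pow_add, Equiv.Perm.mul_apply]

lemma Jz_not_cross (c : ℕ) (q : Fin r × Fin r) (h : q ∈ Jz c) (h2 : q ∈ Jp c ∪ Jm c) :
    False := by
  simp only [Jp, Jm, Jz, Set.mem_union, Set.mem_setOf_eq] at *
  omega

lemma mem_Jz_of_not (c : ℕ) (q : Fin r × Fin r) (h : q ∉ Jp c ∪ Jm c) : q ∈ Jz (r := r) c := by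
  simp only [Jp, Jm, Jz, Set.mem_union, Set.mem_setOf_eq] at *
  omega

lemma nu_spec_of_mem_Jm (π : Equiv.Perm (Fin r)) (c : ℕ) (q : Fin r × Fin r) (hq : q ∈ Jm c) :
    0 < nu π c q ∧ iter π (nu π c q) q ∈ Jp c ∪ Jm c ∧ nu π c q ≤ orderOf π ∧
      ∀ u, 0 < u → u < nu π c q → iter π u q ∈ Jz c := by
  have hord : 0 < orderOf π := orderOf_pos π
  have hmem : orderOf π ∈ {ν : ℕ | 0 < ν ∧ iter π ν q ∈ Jp c ∪ Jm c} := by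
    refine ⟨hord, ?_⟩
    have : iter π (orderOf π) q = q := by
      simp [iter, pow_orderOf_eq_one]
    rw [this]; exact Or.inr hq
  have hne : {ν : ℕ | 0 < ν ∧ iter π ν q ∈ Jp c ∪ Jm c}.Nonempty := ⟨_, hmem⟩
  have hsp := Nat.sInf_mem hne
  refine ⟨hsp.1, hsp.2, Nat.sInf_le hmem, fun u hu hu2 => ?_⟩
  have := Nat.notMem_of_lt_sInf hu2
  simp only [Set.mem_setOf_eq, not_and] at this
  exact mem_Jz_of_not c _ (this hu)

lemma nu_spec_of_mem_Jz0 (π : Equiv.Perm (Fin r)) (c : ℕ) (q' : Fin r × Fin r)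
    (hq' : q' ∈ Jz0 π c) :
    0 < nu π c q' ∧ iter π (nu π c q') q' ∈ Jp c ∧ nu π c q' ≤ orderOf π ∧
      ∀ u, 0 < u → u < nu π c q' → iter π u q' ∈ Jz c := by
  obtain ⟨q, ⟨hqm, hqp⟩, s₀, hs1, hs2, rfl⟩ := hq'
  obtain ⟨hpos, _, hle, hmin⟩ := nu_spec_of_mem_Jm π c q hqm
  have hs : s₀ < nu π c q := by omega
  have hmem : (nu π c q - s₀) ∈ {ν : ℕ | 0 < ν ∧ iter π ν (iter π s₀ q) ∈ Jp c ∪ Jm c} := by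
    refine ⟨by omega, ?_⟩
    rw [iter_iter, Nat.sub_add_cancel (le_of_lt hs)]
    exact Or.inl hqp
  have hkey : nu π c (iter π s₀ q) = nu π c q - s₀ := by
    have h1 : nu π c (iter π s₀ q) ≤ nu π c q - s₀ := Nat.sInf_le hmem
    have h2 := Nat.sInf_mem (⟨_, hmem⟩ :
      {ν : ℕ | 0 < ν ∧ iter π ν (iter π s₀ q) ∈ Jp c ∪ Jm c}.Nonempty)
    rcases le_or_gt (nu π c q - s₀) (nu π c (iter π s₀ q)) with hge | hlt
    · omega
    · exfalso
      have hz := hmin (nu π c (iter π s₀ q) + s₀) (by omega) (by omega)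
      rw [← iter_iter] at hz
      exact Jz_not_cross c _ hz h2.2
  rw [hkey]
  refine ⟨by omega, ?_, by omega, fun u hu hu2 => ?_⟩
  · rw [iter_iter, Nat.sub_add_cancel (le_of_lt hs)]; exact hqp
  · rw [iter_iter]
    exact hmin (u + s₀) (by omega) (by omega)

lemma Jz0_subset_Jz (π : Equiv.Perm (Fin r)) (c : ℕ) : Jz0 π c ⊆ Jz c := by
  rintro q' ⟨q, ⟨hqm, _⟩, s₀, hs1, hs2, rfl⟩
  obtain ⟨hpos, _, _, hmin⟩ := nu_spec_of_mem_Jm π c q hqm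
  exact hmin s₀ (by omega) (by omega)

lemma geom_eq2 (x : ℚ) (k₀ : ℕ) : ∀ N, k₀ ≤ N →
    (1 - x) * ∑ k ∈ Finset.Ioc k₀ N, x ^ k = x ^ (k₀ + 1) - x ^ (N + 1) := by
  intro N hN
  induction N, hN using Nat.le_induction with
  | base => simp
  | succ N hN ih =>
      rw [← Finset.Icc_add_one_left_eq_Ioc, Finset.sum_Icc_succ_top (by omega), Finset.Icc_add_one_left_eq_Ioc,
        mul_add, ih]
      ring

lemma tail_lt (x : ℚ) (hx0 : 0 < x) (hx1 : x < 1) (k₀ N : ℕ) :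
    ∑ k ∈ Finset.Ioc k₀ N, x ^ k < x ^ (k₀ + 1) / (1 - x) := by
  have h1x : 0 < 1 - x := by linarith
  rcases le_or_gt k₀ N with hN | hN
  · have := geom_eq2 x k₀ N hN
    have hxN : 0 < x ^ (N + 1) := pow_pos hx0 _
    rw [lt_div_iff₀ h1x, mul_comm]
    linarith
  · rw [Finset.Ioc_eq_empty (by omega)]
    simp only [Finset.sum_empty]
    positivity

lemma tel (W : ℕ → ℚ) (n : ℕ) :
    ∑ ℓ ∈ Finset.Ioc 0 n, (W ℓ - W (ℓ + 1)) = W 1 - W (n + 1) := by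
  induction n with
  | zero => simp
  | succ n ih =>
      rw [← Finset.Icc_add_one_left_eq_Ioc, Finset.sum_Icc_succ_top (by omega), Finset.Icc_add_one_left_eq_Ioc, ih]
      ring

end AuxPurity

theorem statement_13 (p : ℕ) (hp : p.Prime) (a : ℕ) (ha : 2 ≤ a)
    (c d : ℕ) (hc : 0 < c) (hd : 0 < d)
    (π : Equiv.Perm (Fin (c + d))) (s : ℕ) (γ : ℕ → Fin (c + d))
    (hγ : inGamma π c s γ)
    (h : ∀ t : ℕ, 0 < t → ¬ a ∣ t → nCount π c s γ t = 0) :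
    kappa p π c s γ < 1 / ((p : ℚ) ^ a - 2) ∧
      kappa p π c s γ < 1 - 1 / (p : ℚ) := by
  obtain ⟨hs2, hz0, hp2⟩ := hγ
  set M := orderOf π with hM
  have hp2q : (2 : ℚ) ≤ (p : ℚ) := by exact_mod_cast hp.two_le
  have hA : (4 : ℚ) ≤ (p : ℚ) ^ a := by
    calc (4 : ℚ) = 2 ^ 2 := by norm_num
    _ ≤ 2 ^ a := by
        apply pow_le_pow_right₀ (by norm_num) ha
    _ ≤ (p : ℚ) ^ a := by
        apply pow_le_pow_left₀ (by norm_num) hp2q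
  set x : ℚ := ((p : ℚ) ^ a)⁻¹ with hxdef
  have hA0 : (0 : ℚ) < (p : ℚ) ^ a := by linarith
  have hx0 : 0 < x := by positivity
  have hx4 : x ≤ 1 / 4 := by
    rw [hxdef]
    rw [inv_le_comm₀ (by linarith) (by norm_num)]
    linarith
  have hx1 : x < 1 := by linarith
  have h1x : 0 < 1 - x := by linarith
  have h12x : 0 < 1 - 2 * x := by linarith
  set C : ℚ := (1 - 2 * x) / (1 - x) with hCdef
  have hC0 : 0 < C := by positivity
  set V : Fin (c + d) → ℚ :=
    fun z => ∑ k ∈ Finset.Ioc 0 M, (if c ≤ ((π ^ (k * a)) z).val then x ^ k else 0) with hVdef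
  have hV0 : ∀ z, 0 ≤ V z := by
    intro z
    apply Finset.sum_nonneg
    intro k _
    split <;> positivity
  have hVle : ∀ z, V z ≤ ∑ k ∈ Finset.Ioc 0 M, x ^ k := by
    intro z
    apply Finset.sum_le_sum
    intro k _
    split
    · exact le_refl _
    · positivity
  -- the key per-pair estimate
  have key : ∀ q' : Fin (c + d) × Fin (c + d), q' ∈ Jz0 π c → a ∣ nu π c q' →
      ((p : ℚ) ^ (nu π c q'))⁻¹ * C < V q'.1 - V q'.2 := by
    intro q' hq' hdvd
    obtain ⟨hpos, hland, hleM, hmin⟩ := nu_spec_of_mem_Jz0 π c q' hq'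
    obtain ⟨k₀, hk₀⟩ := hdvd
    have hk₀1 : 1 ≤ k₀ := by
      rcases Nat.eq_zero_or_pos k₀ with h | h
      · subst h
        simp at hk₀
        omega
      · omega
    have hk₀M : k₀ ≤ M := by
      have h1 : k₀ ≤ a * k₀ := Nat.le_mul_of_pos_left k₀ (by omega)
      rw [hM]
      omega
    have hppow : ((p : ℚ) ^ (nu π c q'))⁻¹ = x ^ k₀ := by
      rw [hk₀, pow_mul, hxdef, inv_pow]
    rw [hppow]
    have hVsub : V q'.1 - V q'.2 = ∑ k ∈ Finset.Ioc 0 M,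
        ((if c ≤ ((π ^ (k * a)) q'.1).val then x ^ k else 0) -
         (if c ≤ ((π ^ (k * a)) q'.2).val then x ^ k else 0)) := by
      rw [hVdef, Finset.sum_sub_distrib]
    rw [hVsub, ← Finset.sum_Ioc_consecutive _ (Nat.zero_le k₀) hk₀M]
    have hland' : ((π ^ (nu π c q')) q'.2).val < c ∧ c ≤ ((π ^ (nu π c q')) q'.1).val := hland
    have h1 : ∑ k ∈ Finset.Ioc 0 k₀,
        ((if c ≤ ((π ^ (k * a)) q'.1).val then x ^ k else 0) -
         (if c ≤ ((π ^ (k * a)) q'.2).val then x ^ k else 0)) = x ^ k₀ := by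
      rw [Finset.sum_eq_single_of_mem k₀ (by simp [Finset.mem_Ioc]; omega)]
      · have hexp : k₀ * a = nu π c q' := by rw [hk₀, mul_comm]
        rw [hexp, if_pos hland'.2, if_neg (not_le.mpr hland'.1), sub_zero]
      · intro b hb hbne
        simp only [Finset.mem_Ioc] at hb
        have hz := hmin (b * a) (Nat.mul_pos (by omega) (by omega)) (by
          have h2 : b * a < k₀ * a := mul_lt_mul_of_pos_right (by omega) (by omega)
          rw [hk₀, mul_comm a k₀]
          exact h2)
        have hz' : (((π ^ (b * a)) q'.1).val < c ∧ ((π ^ (b * a)) q'.2).val < c) ∨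
            (c ≤ ((π ^ (b * a)) q'.1).val ∧ c ≤ ((π ^ (b * a)) q'.2).val) := hz
        rcases hz' with ⟨h1, h2⟩ | ⟨h1, h2⟩
        · rw [if_neg (not_le.mpr h1), if_neg (not_le.mpr h2), sub_zero]
        · rw [if_pos h1, if_pos h2, sub_self]
    rw [h1]
    have h2 : -(∑ k ∈ Finset.Ioc k₀ M, x ^ k) ≤ ∑ k ∈ Finset.Ioc k₀ M,
        ((if c ≤ ((π ^ (k * a)) q'.1).val then x ^ k else 0) -
         (if c ≤ ((π ^ (k * a)) q'.2).val then x ^ k else 0)) := by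
      rw [← Finset.sum_neg_distrib]
      apply Finset.sum_le_sum
      intro k _
      have hxk : (0:ℚ) ≤ x ^ k := by positivity
      split <;> split <;> simp <;> linarith
    have h3 := tail_lt x hx0 hx1 k₀ M
    have h4 : x ^ k₀ * C = x ^ k₀ - x ^ (k₀ + 1) / (1 - x) := by
      rw [hCdef, pow_succ]
      field_simp
      ring
    linarith
  -- nCount as a Finset card
  have hsetEq : ∀ t : ℕ, {ℓ : ℕ | 1 ≤ ℓ ∧ ℓ ≤ s - 1 ∧ (γ ℓ, γ (ℓ + 1)) ∈ Jz0 π c ∧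
      nu π c (γ ℓ, γ (ℓ + 1)) = t}
      = ↑((Finset.Ioc 0 (s - 2)).filter fun ℓ => nu π c (γ ℓ, γ (ℓ + 1)) = t) := by
    intro t
    ext ℓ
    simp only [Set.mem_setOf_eq, Finset.coe_filter, Finset.mem_Ioc]
    constructor
    · rintro ⟨h1, h2, h3, h4⟩
      refine ⟨⟨by omega, ?_⟩, h4⟩
      by_contra hgt
      have hℓ : ℓ = s - 1 := by omega
      subst hℓ
      have hss : s - 1 + 1 = s := by omega
      rw [hss] at h3
      exact Jz_not_cross c _ (Jz0_subset_Jz π c h3) (Or.inl hp2.1)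
    · rintro ⟨⟨h1, h2⟩, h4⟩
      exact ⟨by omega, by omega, hz0 ℓ (by omega) h2, h4⟩
  have hcard : ∀ t : ℕ, nCount π c s γ t
      = ((Finset.Ioc 0 (s - 2)).filter fun ℓ => nu π c (γ ℓ, γ (ℓ + 1)) = t).card := by
    intro t
    simp only [nCount]
    rw [hsetEq, Set.ncard_coe_finset]
  set F : ℕ → ℚ := fun t => if 1 ≤ t then (nCount π c s γ t : ℚ) / (p : ℚ) ^ t else 0 with hF
  have hκF : kappa p π c s γ = ∑ᶠ t, F t := rfl
  have hnuIoc : ∀ ℓ ∈ Finset.Ioc 0 (s - 2), nu π c (γ ℓ, γ (ℓ + 1)) ∈ Finset.Ioc 0 M := by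
    intro ℓ hℓ
    simp only [Finset.mem_Ioc] at hℓ ⊢
    obtain ⟨hpos, _, hle, _⟩ := nu_spec_of_mem_Jz0 π c _ (hz0 ℓ (by omega) hℓ.2)
    exact ⟨hpos, hle⟩
  have hsupp : Function.support F ⊆ ↑(Finset.Ioc 0 M) := by
    intro t ht
    simp only [Function.mem_support, hF] at ht
    by_cases h1t : 1 ≤ t
    · rw [if_pos h1t] at ht
      have hne : nCount π c s γ t ≠ 0 := by
        intro h0
        rw [h0] at ht
        simp at ht
      rw [hcard] at hne
      obtain ⟨ℓ, hℓ⟩ := Finset.card_ne_zero.mp hne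
      have hmf := Finset.mem_filter.mp hℓ
      have := hnuIoc ℓ hmf.1
      rw [hmf.2] at this
      simpa using this
    · rw [if_neg h1t] at ht
      exact absurd rfl ht
  have hκ : kappa p π c s γ
      = ∑ ℓ ∈ Finset.Ioc 0 (s - 2), ((p : ℚ) ^ (nu π c (γ ℓ, γ (ℓ + 1))))⁻¹ := by
    rw [hκF, finsum_eq_sum_of_support_subset F hsupp,
      ← Finset.sum_fiberwise_of_maps_to hnuIoc
        (fun ℓ => ((p : ℚ) ^ (nu π c (γ ℓ, γ (ℓ + 1))))⁻¹)]
    apply Finset.sum_congr rfl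
    intro t ht
    simp only [Finset.mem_Ioc] at ht
    rw [hF]
    simp only []
    rw [if_pos (by omega : 1 ≤ t), hcard t,
      Finset.sum_congr rfl (fun ℓ hℓ => by rw [(Finset.mem_filter.mp hℓ).2]),
      Finset.sum_const, nsmul_eq_mul, div_eq_mul_inv]
  by_cases hs3 : s - 2 = 0
  · have hk0 : kappa p π c s γ = 0 := by
      rw [hκ, hs3]
      simp
    rw [hk0]
    have hple : 1 / (p : ℚ) ≤ 1 / 2 := one_div_le_one_div_of_le (by norm_num) hp2q
    constructor
    · exact div_pos one_pos (by linarith)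
    · linarith
  · have hdvdall : ∀ ℓ ∈ Finset.Ioc 0 (s - 2), a ∣ nu π c (γ ℓ, γ (ℓ + 1)) := by
      intro ℓ hℓ
      simp only [Finset.mem_Ioc] at hℓ
      by_contra hnd
      have hposν := (nu_spec_of_mem_Jz0 π c _ (hz0 ℓ (by omega) hℓ.2)).1
      have h0 := h _ hposν hnd
      rw [hcard] at h0
      have hmem : ℓ ∈ (Finset.Ioc 0 (s - 2)).filter
          fun ℓ' => nu π c (γ ℓ', γ (ℓ' + 1)) = nu π c (γ ℓ, γ (ℓ + 1)) :=
        Finset.mem_filter.mpr ⟨by simp only [Finset.mem_Ioc]; omega, rfl⟩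
      rw [Finset.card_eq_zero] at h0
      rw [h0] at hmem
      simp at hmem
    have hlt : ∀ ℓ ∈ Finset.Ioc 0 (s - 2),
        ((p : ℚ) ^ (nu π c (γ ℓ, γ (ℓ + 1))))⁻¹ * C < V (γ ℓ) - V (γ (ℓ + 1)) := by
      intro ℓ hℓ
      simp only [Finset.mem_Ioc] at hℓ
      exact key _ (hz0 ℓ (by omega) hℓ.2) (hdvdall ℓ (by simp only [Finset.mem_Ioc]; omega))
    have hne : (Finset.Ioc 0 (s - 2)).Nonempty := ⟨1, by simp only [Finset.mem_Ioc]; omega⟩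
    have hsum := Finset.sum_lt_sum_of_nonempty hne hlt
    have htel : ∑ ℓ ∈ Finset.Ioc 0 (s - 2), (V (γ ℓ) - V (γ (ℓ + 1)))
        = V (γ 1) - V (γ (s - 2 + 1)) := tel _ _
    have h5 : V (γ 1) ≤ ∑ k ∈ Finset.Ioc 0 M, x ^ k := hVle _
    have h6 := tail_lt x hx0 hx1 0 M
    rw [pow_one] at h6
    have h7 : ∑ ℓ ∈ Finset.Ioc 0 (s - 2), ((p : ℚ) ^ (nu π c (γ ℓ, γ (ℓ + 1))))⁻¹ * C
        = kappa p π c s γ * C := by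
      rw [hκ, Finset.sum_mul]
    have hV0' := hV0 (γ (s - 2 + 1))
    have h8 : kappa p π c s γ * C < x / (1 - x) := by
      rw [← h7]
      calc ∑ ℓ ∈ Finset.Ioc 0 (s - 2), ((p : ℚ) ^ (nu π c (γ ℓ, γ (ℓ + 1))))⁻¹ * C
          < ∑ ℓ ∈ Finset.Ioc 0 (s - 2), (V (γ ℓ) - V (γ (ℓ + 1))) := hsum
        _ = V (γ 1) - V (γ (s - 2 + 1)) := htel
        _ ≤ x / (1 - x) := by linarith
    have h9 : kappa p π c s γ * (1 - 2 * x) < x := by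
      calc kappa p π c s γ * (1 - 2 * x) = (kappa p π c s γ * C) * (1 - x) := by
            rw [hCdef]
            field_simp
        _ < (x / (1 - x)) * (1 - x) := mul_lt_mul_of_pos_right h8 h1x
        _ = x := by field_simp
    have hxA : x * ((p : ℚ) ^ a) = 1 := by
      rw [hxdef]
      field_simp
    have hgoal1 : kappa p π c s γ < 1 / ((p : ℚ) ^ a - 2) := by
      rw [lt_div_iff₀ (by linarith : (0 : ℚ) < (p : ℚ) ^ a - 2)]
      have h10 := mul_lt_mul_of_pos_right h9 hA0
      nlinarith
    refine ⟨hgoal1, ?_⟩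
    have hh1 : 1 / ((p : ℚ) ^ a - 2) ≤ 1 / 2 :=
      one_div_le_one_div_of_le (by norm_num) (by linarith)
    have hple : 1 / (p : ℚ) ≤ 1 / 2 := one_div_le_one_div_of_le (by norm_num) hp2q
    linarith

end PaperPurity
end

section
/- With the combinatorial setup below, let π be the r-cycle given by π(i) = i + 1 for 1 ≤ i < r and π(r) = 1. Then: (i) J₋,₁ = {(i, r) : 1 ≤ i ≤ c} ∪ {(c, j) : c + 1 ≤ j ≤ r − 1}; (ii) ν(i, r) = c + 1 − i for 1 ≤ i ≤ c, and ν(c, j) = r + 1 − j for c + 1 ≤ j ≤ r − 1; (iii) J₊,₁ = {(c+1, j) : 1 ≤ j ≤ c} ∪ {(i, 1) : c + 2 ≤ i ≤ r}; (iv) J₀,₀ = {(i,j) : c < i < j ≤ r} ∪ {(i,j) : 1 ≤ j < i ≤ c}. -/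
namespace PaperPurity

variable {r : ℕ}

section Aux

variable {c d : ℕ}

private lemma pow_apply' (π : Equiv.Perm (Fin (c + d)))
    (hπ : ∀ i : Fin (c + d), (π i).val = (i.val + 1) % (c + d)) :
    ∀ (s : ℕ) (x : Fin (c + d)), ((π ^ s) x).val = (x.val + s) % (c + d) := by
  intro s
  induction s with
  | zero => intro x; simp [Nat.mod_eq_of_lt x.isLt]
  | succ n ih =>
    intro x
    have h : (π ^ (n + 1)) x = (π ^ n) (π x) := by
      rw [pow_succ]; rfl
    rw [h, ih, hπ, Nat.mod_add_mod]
    congr 1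
    omega

private lemma iter_fst (π : Equiv.Perm (Fin (c + d)))
    (hπ : ∀ i : Fin (c + d), (π i).val = (i.val + 1) % (c + d))
    (s : ℕ) (q : Fin (c + d) × Fin (c + d)) :
    (iter π s q).1.val = (q.1.val + s) % (c + d) := pow_apply' π hπ s q.1

private lemma iter_snd (π : Equiv.Perm (Fin (c + d)))
    (hπ : ∀ i : Fin (c + d), (π i).val = (i.val + 1) % (c + d))
    (s : ℕ) (q : Fin (c + d) × Fin (c + d)) :
    (iter π s q).2.val = (q.2.val + s) % (c + d) := pow_apply' π hπ s q.2

private lemma nu_eq (π : Equiv.Perm (Fin (c + d))) (q : Fin (c + d) × Fin (c + d))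
    (ν₀ : ℕ) (h0 : 0 < ν₀)
    (hmem : iter π ν₀ q ∈ Jp c ∪ Jm c)
    (hmin : ∀ ν, 0 < ν → ν < ν₀ → iter π ν q ∉ Jp c ∪ Jm c) :
    nu π c q = ν₀ := by
  have hne : ν₀ ∈ {ν : ℕ | 0 < ν ∧ iter π ν q ∈ Jp c ∪ Jm c} := ⟨h0, hmem⟩
  have h1 := Nat.sInf_le hne
  have h2 := Nat.sInf_mem (⟨ν₀, hne⟩ :
    Set.Nonempty {ν : ℕ | 0 < ν ∧ iter π ν q ∈ Jp c ∪ Jm c})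
  rcases lt_or_eq_of_le h1 with h | h
  · exact absurd h2.2 (hmin _ h2.1 h)
  · exact h

private lemma caseA (hc : 0 < c) (hd : 0 < d) (π : Equiv.Perm (Fin (c + d)))
    (hπ : ∀ i : Fin (c + d), (π i).val = (i.val + 1) % (c + d))
    (q : Fin (c + d) × Fin (c + d))
    (hq1 : q.1.val < c) (hq2 : q.2.val = c + d - 1) :
    nu π c q = c - q.1.val ∧
    (iter π (c - q.1.val) q).1.val = c ∧
    (iter π (c - q.1.val) q).2.val = c - q.1.val - 1 := by
  have hv1 : (iter π (c - q.1.val) q).1.val = c := by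
    rw [iter_fst π hπ]
    have h : q.1.val + (c - q.1.val) = c := by omega
    rw [h, Nat.mod_eq_of_lt (by omega)]
  have hv2 : (iter π (c - q.1.val) q).2.val = c - q.1.val - 1 := by
    rw [iter_snd π hπ]
    have h : q.2.val + (c - q.1.val) = (c + d) + (c - q.1.val - 1) := by omega
    rw [h, Nat.add_mod_left, Nat.mod_eq_of_lt (by omega)]
  refine ⟨?_, hv1, hv2⟩
  apply nu_eq π q _ (by omega)
  · left
    exact ⟨by rw [hv2]; omega, by rw [hv1]⟩
  · intro ν h0 hν hmem
    rcases hmem with h | h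
    · have h2 := h.2
      rw [iter_fst π hπ, Nat.mod_eq_of_lt (by omega)] at h2
      omega
    · have h2 := h.2
      rw [iter_snd π hπ] at h2
      have e : q.2.val + ν = (c + d) + (ν - 1) := by omega
      rw [e, Nat.add_mod_left, Nat.mod_eq_of_lt (by omega)] at h2
      omega

private lemma caseB (hc : 0 < c) (hd : 0 < d) (π : Equiv.Perm (Fin (c + d)))
    (hπ : ∀ i : Fin (c + d), (π i).val = (i.val + 1) % (c + d))
    (q : Fin (c + d) × Fin (c + d))
    (hq1 : q.1.val = c - 1) (hq2 : c ≤ q.2.val) (hq3 : q.2.val ≤ c + d - 2) :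
    nu π c q = c + d - q.2.val ∧
    (iter π (c + d - q.2.val) q).1.val = c - 1 + (c + d - q.2.val) ∧
    (iter π (c + d - q.2.val) q).2.val = 0 := by
  have hv1 : (iter π (c + d - q.2.val) q).1.val = c - 1 + (c + d - q.2.val) := by
    rw [iter_fst π hπ, hq1, Nat.mod_eq_of_lt (by omega)]
  have hv2 : (iter π (c + d - q.2.val) q).2.val = 0 := by
    rw [iter_snd π hπ]
    have h : q.2.val + (c + d - q.2.val) = c + d := by omega
    rw [h, Nat.mod_self]
  refine ⟨?_, hv1, hv2⟩
  apply nu_eq π q _ (by omega)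
  · left
    exact ⟨by rw [hv2]; omega, by rw [hv1]; omega⟩
  · intro ν h0 hν hmem
    rcases hmem with h | h
    · have h2 := h.1
      rw [iter_snd π hπ, Nat.mod_eq_of_lt (by omega)] at h2
      omega
    · have h2 := h.1
      rw [iter_fst π hπ, hq1, Nat.mod_eq_of_lt (by omega)] at h2
      omega

private lemma caseC (hc : 0 < c) (hd : 0 < d) (π : Equiv.Perm (Fin (c + d)))
    (hπ : ∀ i : Fin (c + d), (π i).val = (i.val + 1) % (c + d))
    (q : Fin (c + d) × Fin (c + d))
    (h1 : q.1.val + 2 ≤ c) (h2 : c ≤ q.2.val) (h3 : q.2.val + 2 ≤ c + d) :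
    nu π c q = 1 ∧ iter π 1 q ∉ Jp c := by
  have hv1 : (iter π 1 q).1.val = q.1.val + 1 := by
    rw [iter_fst π hπ, Nat.mod_eq_of_lt (by omega)]
  have hv2 : (iter π 1 q).2.val = q.2.val + 1 := by
    rw [iter_snd π hπ, Nat.mod_eq_of_lt (by omega)]
  constructor
  · apply nu_eq π q _ (by omega)
    · right
      exact ⟨by rw [hv1]; omega, by rw [hv2]; omega⟩
    · intro ν h0 hν hmem
      omega
  · intro h
    have := h.2
    rw [hv1] at this
    omega

end Aux

theorem statement_14 (c d : ℕ) (hc : 0 < c) (hd : 0 < d)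
    (π : Equiv.Perm (Fin (c + d)))
    (hπ : ∀ i : Fin (c + d), (π i).val = (i.val + 1) % (c + d)) :
    Jm1 π c = {q : Fin (c + d) × Fin (c + d) |
        (q.1.val < c ∧ q.2.val = c + d - 1) ∨
        (q.1.val = c - 1 ∧ c ≤ q.2.val ∧ q.2.val ≤ c + d - 2)} ∧
    (∀ q ∈ Jm1 π c, q.2.val = c + d - 1 → nu π c q = c - q.1.val) ∧
    (∀ q ∈ Jm1 π c, q.2.val ≤ c + d - 2 → nu π c q = c + d - q.2.val) ∧
    Jp1 π c = {q : Fin (c + d) × Fin (c + d) |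
        (q.1.val = c ∧ q.2.val < c) ∨
        (q.2.val = 0 ∧ c + 1 ≤ q.1.val ∧ q.1.val ≤ c + d - 1)} ∧
    Jz0 π c = {q : Fin (c + d) × Fin (c + d) |
        (c ≤ q.1.val ∧ q.1.val < q.2.val) ∨ (q.2.val < q.1.val ∧ q.1.val < c)} := by
  have part1 : Jm1 π c = {q : Fin (c + d) × Fin (c + d) |
      (q.1.val < c ∧ q.2.val = c + d - 1) ∨
      (q.1.val = c - 1 ∧ c ≤ q.2.val ∧ q.2.val ≤ c + d - 2)} := by
    ext q
    simp only [Jm1, Jm, Jp, Set.mem_setOf_eq]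
    constructor
    · rintro ⟨⟨ha, hb⟩, hp⟩
      by_cases hb1 : q.2.val = c + d - 1
      · exact Or.inl ⟨ha, hb1⟩
      · have hblt := q.2.isLt
        have hb2 : q.2.val ≤ c + d - 2 := by omega
        by_cases ha1 : q.1.val = c - 1
        · exact Or.inr ⟨ha1, hb, hb2⟩
        · exfalso
          obtain ⟨hn, hip⟩ := caseC hc hd π hπ q (by omega) hb (by omega)
          rw [hn] at hp
          exact hip hp
    · rintro (⟨ha, hb⟩ | ⟨ha, hb, hb2⟩)
      · obtain ⟨hn, hv1, hv2⟩ := caseA hc hd π hπ q ha hb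
        refine ⟨⟨ha, by omega⟩, ?_⟩
        rw [hn]
        exact ⟨by rw [hv2]; omega, by rw [hv1]⟩
      · obtain ⟨hn, hv1, hv2⟩ := caseB hc hd π hπ q ha hb hb2
        refine ⟨⟨by omega, hb⟩, ?_⟩
        rw [hn]
        exact ⟨by rw [hv2]; omega, by rw [hv1]; omega⟩
  have part2 : ∀ q ∈ Jm1 π c, q.2.val = c + d - 1 → nu π c q = c - q.1.val := by
    intro q hq hb
    obtain ⟨⟨ha, _⟩, _⟩ := hq
    exact (caseA hc hd π hπ q ha hb).1
  have part3 : ∀ q ∈ Jm1 π c, q.2.val ≤ c + d - 2 → nu π c q = c + d - q.2.val := by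
    intro q hq hb2
    rw [part1] at hq
    rcases hq with ⟨ha, hb⟩ | ⟨ha, hb, _⟩
    · exfalso; omega
    · exact (caseB hc hd π hπ q ha hb hb2).1
  have part4 : Jp1 π c = {q : Fin (c + d) × Fin (c + d) |
      (q.1.val = c ∧ q.2.val < c) ∨
      (q.2.val = 0 ∧ c + 1 ≤ q.1.val ∧ q.1.val ≤ c + d - 1)} := by
    ext q'
    simp only [Jp1, Set.mem_setOf_eq]
    constructor
    · rintro ⟨q, hq, rfl⟩
      rw [part1] at hq
      rcases hq with ⟨ha, hb⟩ | ⟨ha, hb, hb2⟩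
      · obtain ⟨hn, hv1, hv2⟩ := caseA hc hd π hπ q ha hb
        rw [hn]
        exact Or.inl ⟨hv1, by rw [hv2]; omega⟩
      · obtain ⟨hn, hv1, hv2⟩ := caseB hc hd π hπ q ha hb hb2
        rw [hn]
        have hblt := q.2.isLt
        exact Or.inr ⟨hv2, by rw [hv1]; omega, by rw [hv1]; omega⟩
    · rintro (⟨h1, h2⟩ | ⟨h1, h2, h3⟩)
      · set q : Fin (c + d) × Fin (c + d) :=
          (⟨c - q'.2.val - 1, by omega⟩, ⟨c + d - 1, by omega⟩) with hqdef
        have e1 : q.1.val = c - q'.2.val - 1 := rfl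
        have e2 : q.2.val = c + d - 1 := rfl
        obtain ⟨hn, hv1, hv2⟩ := caseA hc hd π hπ q (by omega) e2
        refine ⟨q, ?_, ?_⟩
        · rw [part1]; exact Or.inl ⟨by omega, e2⟩
        · rw [hn, Prod.ext_iff]
          constructor
          · rw [Fin.ext_iff]; omega
          · rw [Fin.ext_iff]; omega
      · have hxlt := q'.1.isLt
        set q : Fin (c + d) × Fin (c + d) :=
          (⟨c - 1, by omega⟩, ⟨c - 1 + (c + d) - q'.1.val, by omega⟩) with hqdef
        have e1 : q.1.val = c - 1 := rfl
        have e2 : q.2.val = c - 1 + (c + d) - q'.1.val := rfl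
        obtain ⟨hn, hv1, hv2⟩ := caseB hc hd π hπ q e1 (by omega) (by omega)
        refine ⟨q, ?_, ?_⟩
        · rw [part1]; exact Or.inr ⟨e1, by omega, by omega⟩
        · rw [hn, Prod.ext_iff]
          constructor
          · rw [Fin.ext_iff]; omega
          · rw [Fin.ext_iff]; omega
  have part5 : Jz0 π c = {q : Fin (c + d) × Fin (c + d) |
      (c ≤ q.1.val ∧ q.1.val < q.2.val) ∨ (q.2.val < q.1.val ∧ q.1.val < c)} := by
    ext q'
    simp only [Jz0, Set.mem_setOf_eq]
    constructor
    · rintro ⟨q, hq, s, hs1, hs2, rfl⟩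
      rw [part1] at hq
      have ha' := q.1.isLt
      have hb' := q.2.isLt
      rcases hq with ⟨ha, hb⟩ | ⟨ha, hb, hb2⟩
      · have hn := (caseA hc hd π hπ q ha hb).1
        rw [hn] at hs2
        have hv1 : (iter π s q).1.val = q.1.val + s := by
          rw [iter_fst π hπ, Nat.mod_eq_of_lt (by omega)]
        have hv2 : (iter π s q).2.val = s - 1 := by
          rw [iter_snd π hπ]
          have e : q.2.val + s = (c + d) + (s - 1) := by omega
          rw [e, Nat.add_mod_left, Nat.mod_eq_of_lt (by omega)]
        exact Or.inr ⟨by omega, by omega⟩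
      · have hn := (caseB hc hd π hπ q ha hb hb2).1
        rw [hn] at hs2
        have hv1 : (iter π s q).1.val = q.1.val + s := by
          rw [iter_fst π hπ, Nat.mod_eq_of_lt (by omega)]
        have hv2 : (iter π s q).2.val = q.2.val + s := by
          rw [iter_snd π hπ, Nat.mod_eq_of_lt (by omega)]
        exact Or.inl ⟨by omega, by omega⟩
    · have hx := q'.1.isLt
      have hy := q'.2.isLt
      rintro (⟨h1, h2⟩ | ⟨h1, h2⟩)
      · set q : Fin (c + d) × Fin (c + d) :=
          (⟨c - 1, by omega⟩, ⟨c - 1 + q'.2.val - q'.1.val, by omega⟩) with hqdef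
        have e1 : q.1.val = c - 1 := rfl
        have e2 : q.2.val = c - 1 + q'.2.val - q'.1.val := rfl
        obtain ⟨hn, _, _⟩ := caseB hc hd π hπ q e1 (by omega) (by omega)
        refine ⟨q, ?_, q'.1.val - c + 1, by omega, ?_, ?_⟩
        · rw [part1]; exact Or.inr ⟨e1, by omega, by omega⟩
        · rw [hn]; omega
        · have hv1 : (iter π (q'.1.val - c + 1) q).1.val = q.1.val + (q'.1.val - c + 1) := by
            rw [iter_fst π hπ, Nat.mod_eq_of_lt (by omega)]
          have hv2 : (iter π (q'.1.val - c + 1) q).2.val = q.2.val + (q'.1.val - c + 1) := by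
            rw [iter_snd π hπ, Nat.mod_eq_of_lt (by omega)]
          rw [Prod.ext_iff]
          constructor
          · rw [Fin.ext_iff]; omega
          · rw [Fin.ext_iff]; omega
      · set q : Fin (c + d) × Fin (c + d) :=
          (⟨q'.1.val - q'.2.val - 1, by omega⟩, ⟨c + d - 1, by omega⟩) with hqdef
        have e1 : q.1.val = q'.1.val - q'.2.val - 1 := rfl
        have e2 : q.2.val = c + d - 1 := rfl
        obtain ⟨hn, _, _⟩ := caseA hc hd π hπ q (by omega) e2
        refine ⟨q, ?_, q'.2.val + 1, by omega, ?_, ?_⟩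
        · rw [part1]; exact Or.inl ⟨by omega, e2⟩
        · rw [hn]; omega
        · have hv1 : (iter π (q'.2.val + 1) q).1.val = q.1.val + (q'.2.val + 1) := by
            rw [iter_fst π hπ, Nat.mod_eq_of_lt (by omega)]
          have hv2 : (iter π (q'.2.val + 1) q).2.val = q'.2.val := by
            rw [iter_snd π hπ]
            have e : q.2.val + (q'.2.val + 1) = (c + d) + q'.2.val := by omega
            rw [e, Nat.add_mod_left, Nat.mod_eq_of_lt (by omega)]
          rw [Prod.ext_iff]
          constructor
          · rw [Fin.ext_iff]; omega
          · rw [Fin.ext_iff]; omega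
  exact ⟨part1, part2, part3, part4, part5⟩

end PaperPurity
end
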